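/- arXiv:2512.07240 — 9 statements merged into one kernel-verified Lean document; each statement's English description precedes it below -/
import Mathlib

section
/- A relation r : α → α → Prop is coreflexive (r ≤ Eq) if and only if it is transitive (Relation.Comp r r ≤ r), symmetric (flip r ≤ r), and single-valued (∀ x y y', r x y → r x y' → y = y'). -/
/-! A coreflexive relation is a partial identity, so it is trivially transitive, symmetric and
single-valued. Conversely, symmetry and transitivity turn any edge `r x y` into a loop `r x x`, and
single-valuedness applied to the two edges `r x y`, `r x x` forces `y = x`. -/

section Coreflexive

variable {α β : Type*}

theorem comp_le_of_le_eq {r : α → α → Prop} (hr : r ≤ Eq) (s : α → β → Prop) :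
    Relation.Comp r s ≤ s := by
  rintro x z ⟨y, hxy, hyz⟩
  rwa [hr x y hxy]

theorem flip_le_of_le_eq {r : α → α → Prop} (hr : r ≤ Eq) : flip r ≤ r := by
  intro x y hyx
  obtain rfl := hr y x hyx
  exact hyx

theorem eq_of_le_eq_of_rel {r : α → α → Prop} (hr : r ≤ Eq) {x y y' : α}
    (hy : r x y) (hy' : r x y') : y = y' :=
  (hr x y hy).symm.trans (hr x y' hy')

theorem rel_self_of_rel {r : α → α → Prop} (htrans : Relation.Comp r r ≤ r)
    (hsymm : flip r ≤ r) {x y : α} (hxy : r x y) : r x x :=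
  htrans x x ⟨y, hxy, hsymm y x hxy⟩

end Coreflexive

theorem coreflexive_iff_transitive_symmetric_singleValued {α : Type*}
    (r : α → α → Prop) :
    r ≤ (Eq : α → α → Prop) ↔
      (Relation.Comp r r ≤ r ∧ flip r ≤ r ∧
        ∀ x y y', r x y → r x y' → y = y') := by
  constructor
  · intro hr
    exact ⟨comp_le_of_le_eq hr r, flip_le_of_le_eq hr, fun _ _ _ => eq_of_le_eq_of_rel hr⟩
  · rintro ⟨htrans, hsymm, hsingle⟩ x y hxy
    exact (hsingle x y x hxy (rel_self_of_rel htrans hsymm hxy)).symm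
end

section
/- For endorelations r : α → α → Prop and s : β → β → Prop, the product of their reflexive-transitive closures equals the reflexive-transitive closure of the union of the two one-sided products: (Relation.ReflTransGen r) ×ᵣ (Relation.ReflTransGen s) = Relation.ReflTransGen (fun p q => (r p.1 q.1 ∧ p.2 = q.2) ∨ (p.1 = q.1 ∧ s p.2 q.2)). -/
/-- Product of relations. -/
def prodRel {α α' β β' : Type*} (r : α → α' → Prop) (s : β → β' → Prop) :
    α × β → α' × β' → Prop :=
  fun p q => r p.1 q.1 ∧ s p.2 q.2

/-!
If `a` reaches `a'` by `r`-steps and `b` reaches `b'` by `s`-steps, then `(a, b)` reaches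
`(a', b')` by first moving the left coordinate and then the right one. Conversely,
`ReflTransGen r ×ᵣ ReflTransGen s` is a preorder containing both one-sided steps, so it
contains their reflexive-transitive closure.
-/

section

variable {α β : Type*} {r : α → α → Prop} {s : β → β → Prop}

instance [Std.Refl r] [Std.Refl s] : Std.Refl (prodRel r s) :=
  ⟨fun p => ⟨refl p.1, refl p.2⟩⟩

instance [IsTrans α r] [IsTrans β s] : IsTrans (α × β) (prodRel r s) :=
  ⟨fun _ _ _ h h' => ⟨_root_.trans h.1 h'.1, _root_.trans h.2 h'.2⟩⟩

theorem prodRel_reflTransGen_le_reflTransGen_union :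
    prodRel (Relation.ReflTransGen r) (Relation.ReflTransGen s) ≤
      Relation.ReflTransGen
        (fun p q : α × β => (r p.1 q.1 ∧ p.2 = q.2) ∨ (p.1 = q.1 ∧ s p.2 q.2)) := by
  rintro ⟨a, b⟩ ⟨a', b'⟩ ⟨hr, hs⟩
  exact (hr.lift (·, b) fun _ _ h => .inl ⟨h, rfl⟩).trans
    (hs.lift (a', ·) fun _ _ h => .inr ⟨rfl, h⟩)

theorem reflTransGen_union_le_prodRel_reflTransGen :
    Relation.ReflTransGen
        (fun p q : α × β => (r p.1 q.1 ∧ p.2 = q.2) ∨ (p.1 = q.1 ∧ s p.2 q.2)) ≤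
      prodRel (Relation.ReflTransGen r) (Relation.ReflTransGen s) := by
  refine Relation.reflTransGen_le_of_le ?_
  rintro ⟨a, b⟩ ⟨a', b'⟩ (⟨hr, rfl⟩ | ⟨rfl, hs⟩)
  · exact ⟨.single hr, .refl⟩
  · exact ⟨.refl, .single hs⟩

end

theorem prodRel_reflTransGen_eq_reflTransGen_union {α β : Type*}
    (r : α → α → Prop) (s : β → β → Prop) :
    prodRel (Relation.ReflTransGen r) (Relation.ReflTransGen s) =
      Relation.ReflTransGen
        (fun p q => (r p.1 q.1 ∧ p.2 = q.2) ∨ (p.1 = q.1 ∧ s p.2 q.2)) :=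
  le_antisymm prodRel_reflTransGen_le_reflTransGen_union
    reflTransGen_union_le_prodRel_reflTransGen
end

section
/- Let a : X → S → Prop, b : S → S → Prop, c : S → Y → Prop, d : X → Y → Prop and a' : X' → S' → Prop, b' : S' → S' → Prop, c' : S' → Y' → Prop, d' : X' → Y' → Prop be relations. Then (Relation.Comp (a ×ᵣ a') (Relation.Comp (Relation.ReflTransGen (b ×ᵣ b')) (c ×ᵣ c'))) ⊔ (d ×ᵣ d') ≤ ((Relation.Comp a (Relation.Comp (Relation.ReflTransGen b) c)) ⊔ d) ×ᵣ ((Relation.Comp a' (Relation.Comp (Relation.ReflTransGen b') c')) ⊔ d'), where ⊔ is pointwise disjunction and ≤ is pointwise implication. -/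
@[gcongr]
theorem Relation.comp_mono {α β γ : Type*} {r r' : α → β → Prop} {s s' : β → γ → Prop}
    (hr : r ≤ r') (hs : s ≤ s') : Relation.Comp r s ≤ Relation.Comp r' s' :=
  fun _ _ ⟨y, hxy, hyz⟩ => ⟨y, hr _ _ hxy, hs _ _ hyz⟩

section prodRel

variable {α α' β β' γ γ' : Type*}

theorem prodRel_comp (r : α → β → Prop) (s : β → γ → Prop) (r' : α' → β' → Prop)
    (s' : β' → γ' → Prop) :
    Relation.Comp (prodRel r r') (prodRel s s') =
      prodRel (Relation.Comp r s) (Relation.Comp r' s') := by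
  ext ⟨x, x'⟩ ⟨z, z'⟩
  constructor
  · rintro ⟨⟨y, y'⟩, ⟨hr, hr'⟩, hs, hs'⟩
    exact ⟨⟨y, hr, hs⟩, ⟨y', hr', hs'⟩⟩
  · rintro ⟨⟨y, hr, hs⟩, ⟨y', hr', hs'⟩⟩
    exact ⟨(y, y'), ⟨hr, hr'⟩, hs, hs'⟩

theorem prodRel_sup_le (r s : α → β → Prop) (r' s' : α' → β' → Prop) :
    prodRel r r' ⊔ prodRel s s' ≤ prodRel (r ⊔ s) (r' ⊔ s') := by
  rintro p q (⟨hr, hr'⟩ | ⟨hs, hs'⟩)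
  · exact ⟨Or.inl hr, Or.inl hr'⟩
  · exact ⟨Or.inr hs, Or.inr hs'⟩

theorem reflTransGen_prodRel_le (r : α → α → Prop) (r' : α' → α' → Prop) :
    Relation.ReflTransGen (prodRel r r') ≤
      prodRel (Relation.ReflTransGen r) (Relation.ReflTransGen r') := by
  intro p q h
  induction h with
  | refl => exact ⟨.refl, .refl⟩
  | tail _ hstep ih => exact ⟨ih.1.tail hstep.1, ih.2.tail hstep.2⟩

end prodRel

theorem trace_prod_le_prod_trace {X S Y X' S' Y' : Type*}
    (a : X → S → Prop) (b : S → S → Prop) (c : S → Y → Prop) (d : X → Y → Prop)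
    (a' : X' → S' → Prop) (b' : S' → S' → Prop) (c' : S' → Y' → Prop)
    (d' : X' → Y' → Prop) :
    (Relation.Comp (prodRel a a')
        (Relation.Comp (Relation.ReflTransGen (prodRel b b')) (prodRel c c'))) ⊔
      (prodRel d d') ≤
    prodRel
      ((Relation.Comp a (Relation.Comp (Relation.ReflTransGen b) c)) ⊔ d)
      ((Relation.Comp a' (Relation.Comp (Relation.ReflTransGen b') c')) ⊔ d') :=
  calc
    _ ≤ Relation.Comp (prodRel a a')
          (Relation.Comp (prodRel (Relation.ReflTransGen b) (Relation.ReflTransGen b'))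
            (prodRel c c')) ⊔ prodRel d d' := by
      gcongr
      exact reflTransGen_prodRel_le b b'
    _ = prodRel (Relation.Comp a (Relation.Comp (Relation.ReflTransGen b) c))
          (Relation.Comp a' (Relation.Comp (Relation.ReflTransGen b') c')) ⊔
          prodRel d d' := by
      rw [prodRel_comp, prodRel_comp]
    _ ≤ _ := prodRel_sup_le _ _ _ _
end

section
/- (Posetal uniformity AU1 of the trace in Rel.) Let f : (S ⊕ X) → (S ⊕ Y) → Prop, g : (T ⊕ X) → (T ⊕ Y) → Prop and r : S → T → Prop. If Relation.Comp f (r ⊕ᵣ (Eq : Y → Y → Prop)) ≤ Relation.Comp (r ⊕ᵣ (Eq : X → X → Prop)) g (pointwise), then trRel f ≤ trRel g. -/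
/-- The canonical trace of the monoidal category `(Rel, ⊕, 0)`. -/
def trRel {S X Y : Type*} (f : (S ⊕ X) → (S ⊕ Y) → Prop) : X → Y → Prop :=
  fun x y =>
    f (Sum.inr x) (Sum.inr y) ∨
    ∃ s t, f (Sum.inr x) (Sum.inl s) ∧
      Relation.ReflTransGen (fun s s' => f (Sum.inl s) (Sum.inl s')) s t ∧
      f (Sum.inl t) (Sum.inr y)

/-- Sum (biproduct) of relations. -/
def sumRel {S T X Y : Type*} (r : S → T → Prop) (q : X → Y → Prop) :
    (S ⊕ X) → (T ⊕ Y) → Prop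
  | Sum.inl s, Sum.inl t => r s t
  | Sum.inr x, Sum.inr y => q x y
  | _, _ => False

/-! Read blockwise, the hypothesis says that the `X → Y` block of `f` lies below that of `g`,
that `r` carries the `S`-entries and `S`-exits of `f` to `T`-entries and `T`-exits of `g`, and
that `r` is a simulation of the `S → S` block of `f` by the `T → T` block of `g`. Simulations lift
to reflexive-transitive closures, so each path through `S` witnessing `trRel f` is matched by a
path through `T` witnessing `trRel g`. -/

section SumRel

variable {S T X Y Z : Type*} (r : S → T → Prop) (q : X → Y → Prop)

theorem sumRel_comp_inl {p : (T ⊕ Y) → Z → Prop} (s : S) (z : Z) :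
    Relation.Comp (sumRel r q) p (Sum.inl s) z ↔ ∃ t, r s t ∧ p (Sum.inl t) z := by
  simp [Relation.Comp, sumRel]

theorem sumRel_comp_inr {p : (T ⊕ Y) → Z → Prop} (x : X) (z : Z) :
    Relation.Comp (sumRel r q) p (Sum.inr x) z ↔ ∃ y, q x y ∧ p (Sum.inr y) z := by
  simp [Relation.Comp, sumRel]

theorem comp_sumRel_inl {p : Z → (S ⊕ X) → Prop} (z : Z) (t : T) :
    Relation.Comp p (sumRel r q) z (Sum.inl t) ↔ ∃ s, p z (Sum.inl s) ∧ r s t := by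
  simp [Relation.Comp, sumRel]

theorem comp_sumRel_inr {p : Z → (S ⊕ X) → Prop} (z : Z) (y : Y) :
    Relation.Comp p (sumRel r q) z (Sum.inr y) ↔ ∃ x, p z (Sum.inr x) ∧ q x y := by
  simp [Relation.Comp, sumRel]

end SumRel

theorem Relation.comp_reflTransGen_le_of_comp_le {α β : Type*} {R : α → α → Prop}
    {R' : β → β → Prop} {r : α → β → Prop} (h : Relation.Comp R r ≤ Relation.Comp r R') :
    Relation.Comp (Relation.ReflTransGen R) r ≤ Relation.Comp r (Relation.ReflTransGen R') := by
  rintro a c ⟨b, hab, hbc⟩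
  induction hab using Relation.ReflTransGen.head_induction_on with
  | refl => exact ⟨c, hbc, .refl⟩
  | head hstep _ ih =>
    obtain ⟨v', hv', hchain⟩ := ih
    obtain ⟨v, hv, hg⟩ := h _ _ ⟨_, hstep, hv'⟩
    exact ⟨v, hv, .head hg hchain⟩

section Uniformity

variable {S T X Y : Type*} {f : (S ⊕ X) → (S ⊕ Y) → Prop} {g : (T ⊕ X) → (T ⊕ Y) → Prop}
  {r : S → T → Prop}

theorem uniform_inr_inr
    (h : Relation.Comp f (sumRel r Eq) ≤ Relation.Comp (sumRel r Eq) g)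
    {x : X} {y : Y} (hf : f (Sum.inr x) (Sum.inr y)) : g (Sum.inr x) (Sum.inr y) := by
  simpa [sumRel_comp_inr] using h _ _ ((comp_sumRel_inr _ _ _ _).2 ⟨y, hf, rfl⟩)

theorem uniform_inr_inl
    (h : Relation.Comp f (sumRel r Eq) ≤ Relation.Comp (sumRel r Eq) g)
    {x : X} {s : S} {t : T} (hf : f (Sum.inr x) (Sum.inl s)) (hr : r s t) :
    g (Sum.inr x) (Sum.inl t) := by
  simpa [sumRel_comp_inr] using h _ _ ((comp_sumRel_inl _ _ _ _).2 ⟨s, hf, hr⟩)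

theorem uniform_inl_inl
    (h : Relation.Comp f (sumRel r Eq) ≤ Relation.Comp (sumRel r Eq) g) :
    Relation.Comp (fun s s' => f (Sum.inl s) (Sum.inl s')) r ≤
      Relation.Comp r (fun t t' => g (Sum.inl t) (Sum.inl t')) := by
  rintro s t' ⟨s', hf, hr⟩
  exact (sumRel_comp_inl _ _ _ _).1 (h _ _ ((comp_sumRel_inl _ _ _ _).2 ⟨s', hf, hr⟩))

theorem uniform_inl_inr
    (h : Relation.Comp f (sumRel r Eq) ≤ Relation.Comp (sumRel r Eq) g)
    {s : S} {y : Y} (hf : f (Sum.inl s) (Sum.inr y)) :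
    ∃ t, r s t ∧ g (Sum.inl t) (Sum.inr y) :=
  (sumRel_comp_inl _ _ _ _).1 (h _ _ ((comp_sumRel_inr _ _ _ _).2 ⟨y, hf, rfl⟩))

end Uniformity

theorem trRel_uniform_AU1 {S T X Y : Type*}
    (f : (S ⊕ X) → (S ⊕ Y) → Prop) (g : (T ⊕ X) → (T ⊕ Y) → Prop)
    (r : S → T → Prop)
    (h : Relation.Comp f (sumRel r (Eq : Y → Y → Prop)) ≤
      Relation.Comp (sumRel r (Eq : X → X → Prop)) g) :
    trRel f ≤ trRel g := by
  rintro x y (hf | ⟨s, t, hxs, hst, hty⟩)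
  · exact .inl (uniform_inr_inr h hf)
  · obtain ⟨u, htu, hgu⟩ := uniform_inl_inr h hty
    obtain ⟨v, hsv, hvu⟩ :=
      Relation.comp_reflTransGen_le_of_comp_le (uniform_inl_inl h) s u ⟨t, hst, htu⟩
    exact .inr ⟨v, u, uniform_inr_inl h hxs hsv, hvu, hgu⟩
end

section
/- (Axiom AT1 of Kleene bicategories holds in Rel.) For any type X, let h : (X ⊕ X) → (X ⊕ X) → Prop be the relation h a b := Sum.elim id id a = Sum.elim id id b (the composite of the codiagonal relation X ⊕ X → X followed by the diagonal relation X → X ⊕ X). Then trRel h ≤ (Eq : X → X → Prop). -/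
theorem trRel_codiag_diag_le_id {X : Type*} :
    trRel (fun (a b : X ⊕ X) => Sum.elim id id a = Sum.elim id id b) ≤
      (Eq : X → X → Prop) := by
  rintro x y (hxy | ⟨s, t, hxs, hst, hty⟩)
  · exact hxy
  · replace hst : Relation.ReflTransGen (· = ·) s t := hst
    rw [Relation.reflTransGen_eq_self] at hst
    exact hxs.trans (hst.trans hty)
end

section
/- (Coherence of the ⊕-trace with the product ⊗ in Rel.) Let f : (S ⊕ X) → (S ⊕ Y) → Prop be a relation and Z a type. Define g : ((S × Z) ⊕ (X × Z)) → ((S × Z) ⊕ (Y × Z)) → Prop by: g (Sum.inl (s,z)) (Sum.inl (s',z')) := fSS s s' ∧ z = z'; g (Sum.inl (s,z)) (Sum.inr (y,z')) := fSY s y ∧ z = z'; g (Sum.inr (x,z)) (Sum.inl (s,z')) := fXS x s ∧ z = z'; g (Sum.inr (x,z)) (Sum.inr (y,z')) := fXY x y ∧ z = z'. Then trRel g = (trRel f) ×ᵣ (Eq : Z → Z → Prop). -/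
open Relation

theorem reflTransGen_prodRel_eq_iff {α β : Type*} {r : α → α → Prop} {a b : α × β} :
    ReflTransGen (prodRel r Eq) a b ↔ ReflTransGen r a.1 b.1 ∧ a.2 = b.2 := by
  constructor
  · intro h
    induction h with
    | refl => exact ⟨.refl, rfl⟩
    | tail _ hstep ih => exact ⟨ih.1.tail hstep.1, ih.2.trans hstep.2⟩
  · obtain ⟨a, z⟩ := a
    obtain ⟨b, z'⟩ := b
    rintro ⟨h, rfl : z = z'⟩
    exact h.lift (·, z) fun _ _ hab => ⟨hab, rfl⟩

theorem trRel_whisker_right {S X Y Z : Type*} (f : (S ⊕ X) → (S ⊕ Y) → Prop) :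
    trRel (fun (p : (S × Z) ⊕ (X × Z)) (q : (S × Z) ⊕ (Y × Z)) =>
      match p, q with
      | Sum.inl (s, z), Sum.inl (s', z') => f (Sum.inl s) (Sum.inl s') ∧ z = z'
      | Sum.inl (s, z), Sum.inr (y, z') => f (Sum.inl s) (Sum.inr y) ∧ z = z'
      | Sum.inr (x, z), Sum.inl (s, z') => f (Sum.inr x) (Sum.inl s) ∧ z = z'
      | Sum.inr (x, z), Sum.inr (y, z') => f (Sum.inr x) (Sum.inr y) ∧ z = z') =
    prodRel (trRel f) (Eq : Z → Z → Prop) := by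
  funext ⟨x, z⟩ ⟨y, z'⟩
  -- The `S × Z`-block is `prodRel fSS Eq` up to structure eta, so its paths keep `z` fixed.
  change (_ ∨ ∃ s t, _ ∧ ReflTransGen (prodRel (fun s s' => f (.inl s) (.inl s')) Eq) s t ∧ _) = _
  simp only [reflTransGen_prodRel_eq_iff, Prod.exists, trRel, prodRel, eq_iff_iff]
  constructor
  · rintro (⟨hxy, rfl⟩ | ⟨s, _, t, _, ⟨hxs, rfl⟩, ⟨hst, rfl⟩, hty, rfl⟩)
    · exact ⟨.inl hxy, rfl⟩
    · exact ⟨.inr ⟨s, t, hxs, hst, hty⟩, rfl⟩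
  · rintro ⟨hxy | ⟨s, t, hxs, hst, hty⟩, rfl⟩
    · exact .inl ⟨hxy, rfl⟩
    · exact .inr ⟨s, z, t, z, ⟨hxs, rfl⟩, ⟨hst, rfl⟩, hty, rfl⟩
end

section
/- (Joining axiom of the trace in Rel.) Let f : (S ⊕ (T ⊕ X)) → (S ⊕ (T ⊕ Y)) → Prop be a relation. Then iterated tracing agrees with tracing over the sum: trRel (trRel f) = trRel (fun a b => f (Equiv.sumAssoc S T X a) (Equiv.sumAssoc S T Y b)), where trRel f : (T ⊕ X) → (T ⊕ Y) → Prop is the trace over S, the outer trRel on the left is the trace over T, the right-hand trace is over S ⊕ T, and Equiv.sumAssoc S T X : (S ⊕ T) ⊕ X ≃ S ⊕ (T ⊕ X) is the canonical associativity equivalence. -/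
/-!
A trace in `Rel` is reachability: `trRel f x y` says that some walk leaves `x`, passes through
hidden states and exits at `y`, i.e. it is a path of `trStep f`, which moves only out of hidden
states. A walk through the hidden states `S ⊕ T` of the right-hand side cuts at its visits to `T`
into walks through `S`, and a piece between two consecutive visits to `T` is exactly one step of
the inner trace `trRel f`; this matches the walks of the two sides.
-/

def trStep {S X Y : Type*} (f : (S ⊕ X) → (S ⊕ Y) → Prop) : (S ⊕ Y) → (S ⊕ Y) → Prop
  | Sum.inl s, b => f (Sum.inl s) b
  | Sum.inr _, _ => False

open Relation

section trStep

variable {S X Y : Type*} (f : (S ⊕ X) → (S ⊕ Y) → Prop)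

lemma eq_of_reflTransGen_trStep_inr {y : Y} {b : S ⊕ Y}
    (h : ReflTransGen (trStep f) (Sum.inr y) b) : b = Sum.inr y := by
  rcases h.cases_head with rfl | ⟨_, hstep, _⟩
  · rfl
  · exact hstep.elim

lemma reflTransGen_trStep_inl_inr_iff {s : S} {y : Y} :
    ReflTransGen (trStep f) (Sum.inl s) (Sum.inr y) ↔
      ∃ t, ReflTransGen (fun s s' => f (Sum.inl s) (Sum.inl s')) s t ∧
        f (Sum.inl t) (Sum.inr y) := by
  constructor
  · intro h
    generalize hs : (Sum.inl s : S ⊕ Y) = a at h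
    induction h using ReflTransGen.head_induction_on generalizing s with
    | refl => cases hs
    | @head a c hac hcy ih =>
      subst hs
      rcases c with s' | y'
      · obtain ⟨t, hs't, hty⟩ := ih rfl
        exact ⟨t, hs't.head hac, hty⟩
      · cases eq_of_reflTransGen_trStep_inr f hcy
        exact ⟨s, .refl, hac⟩
  · rintro ⟨t, hst, hty⟩
    exact (hst.lift Sum.inl fun _ _ h => h).tail hty

lemma trRel_iff_exists_reflTransGen_trStep {x : X} {y : Y} :
    trRel f x y ↔ ∃ b, f (Sum.inr x) b ∧ ReflTransGen (trStep f) b (Sum.inr y) := by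
  constructor
  · rintro (hxy | ⟨s, t, hxs, hst, hty⟩)
    · exact ⟨Sum.inr y, hxy, .refl⟩
    · exact ⟨Sum.inl s, hxs, (reflTransGen_trStep_inl_inr_iff f).2 ⟨t, hst, hty⟩⟩
  · rintro ⟨b | y', hxb, hby⟩
    · obtain ⟨t, hbt, hty⟩ := (reflTransGen_trStep_inl_inr_iff f).1 hby
      exact Or.inr ⟨b, t, hxb, hbt, hty⟩
    · cases Sum.inr_injective (eq_of_reflTransGen_trStep_inr f hby)
      exact Or.inl hxb

end trStep

section sumAssoc

variable {S T X Y : Type*} (f : (S ⊕ (T ⊕ X)) → (S ⊕ (T ⊕ Y)) → Prop)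

def sumAssocRel : ((S ⊕ T) ⊕ X) → ((S ⊕ T) ⊕ Y) → Prop :=
  fun a b => f (Equiv.sumAssoc S T X a) (Equiv.sumAssoc S T Y b)

lemma reflTransGen_trStep_sumAssocRel_symm {c c' : S ⊕ (T ⊕ Y)}
    (h : ReflTransGen (trStep f) c c') :
    ReflTransGen (trStep (sumAssocRel f))
      ((Equiv.sumAssoc S T Y).symm c) ((Equiv.sumAssoc S T Y).symm c') := by
  refine h.lift _ fun c c' hcc' => ?_
  rcases c with s | _
  · simpa [Function.onFun, trStep, sumAssocRel] using hcc'
  · exact hcc'.elim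

lemma reflTransGen_trStep_sumAssocRel_of_trStep_trRel {b b' : T ⊕ Y}
    (h : trStep (trRel f) b b') :
    ReflTransGen (trStep (sumAssocRel f))
      ((Equiv.sumAssoc S T Y).symm (Sum.inr b)) ((Equiv.sumAssoc S T Y).symm (Sum.inr b')) := by
  rcases b with t | _
  · obtain ⟨c, htc, hcb'⟩ := (trRel_iff_exists_reflTransGen_trStep f).1 h
    have htc' : trStep (sumAssocRel f) (Sum.inl (Sum.inr t)) ((Equiv.sumAssoc S T Y).symm c) := by
      simpa [trStep, sumAssocRel] using htc
    exact .head htc' (reflTransGen_trStep_sumAssocRel_symm f hcb')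
  · exact h.elim

lemma reflTransGen_trStep_sumAssocRel_iff {y : Y} {d : (S ⊕ T) ⊕ Y} :
    ReflTransGen (trStep (sumAssocRel f)) d (Sum.inr y) ↔
      ∃ b, ReflTransGen (trStep f) (Equiv.sumAssoc S T Y d) (Sum.inr b) ∧
        ReflTransGen (trStep (trRel f)) b (Sum.inr y) := by
  constructor
  · intro h
    induction h using ReflTransGen.head_induction_on with
    | refl => exact ⟨Sum.inr y, .refl, .refl⟩
    | @head d d' hdd' _ ih =>
      obtain ⟨b, hd'b, hby⟩ := ih
      rcases d with (s | t) | _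
      · exact ⟨b, hd'b.head hdd', hby⟩
      · have htb : trRel f (Sum.inl t) b :=
          (trRel_iff_exists_reflTransGen_trStep f).2 ⟨_, hdd', hd'b⟩
        exact ⟨Sum.inl t, .refl, hby.head htb⟩
      · exact hdd'.elim
  · rintro ⟨b, hdb, hby⟩
    have hd := reflTransGen_trStep_sumAssocRel_symm f hdb
    rw [Equiv.symm_apply_apply] at hd
    refine hd.trans ?_
    simpa [Function.onFun] using hby.lift' _
      fun _ _ hbb' => reflTransGen_trStep_sumAssocRel_of_trStep_trRel f hbb'

end sumAssoc

theorem trRel_joining {S T X Y : Type*}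
    (f : (S ⊕ (T ⊕ X)) → (S ⊕ (T ⊕ Y)) → Prop) :
    trRel (trRel f) =
      trRel (fun (a : (S ⊕ T) ⊕ X) (b : (S ⊕ T) ⊕ Y) =>
        f (Equiv.sumAssoc S T X a) (Equiv.sumAssoc S T Y b)) := by
  ext x y
  change _ ↔ trRel (sumAssocRel f) x y
  simp only [trRel_iff_exists_reflTransGen_trStep, reflTransGen_trStep_sumAssocRel_iff]
  constructor
  · rintro ⟨b, ⟨c, hxc, hcb⟩, hby⟩
    exact ⟨(Equiv.sumAssoc S T Y).symm c, by simpa [sumAssocRel] using hxc,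
      b, by simpa using hcb, hby⟩
  · rintro ⟨d, hxd, b, hdb, hby⟩
    exact ⟨b, ⟨_, hxd, hdb⟩, hby⟩
end

section
/- Define the step relation step : ℕ × ℕ → ℕ × ℕ → Prop by step p q := p.1 = q.1 + 1 ∧ q.2 = p.2 + 1 (decrement the first component, increment the second). Then for all x y z : ℕ, Relation.ReflTransGen step (x, y) (0, z) ↔ z = x + y. In particular the iterative addition program is total and computes addition. -/
/-- One step of the iterative addition program:
decrement the first component, increment the second. -/
def step : ℕ × ℕ → ℕ × ℕ → Prop := fun p q => p.1 = q.1 + 1 ∧ q.2 = p.2 + 1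

/-! The sum of the two registers is invariant under `step`, and every state `(x, y)` reaches
`(0, x + y)` by `x` steps; together these pin down the unique final value. -/

namespace step

theorem fst_add_snd {p q : ℕ × ℕ} (h : step p q) : q.1 + q.2 = p.1 + p.2 := by
  obtain ⟨h₁, h₂⟩ := h
  omega

theorem reflTransGen_fst_add_snd {p q : ℕ × ℕ} (h : Relation.ReflTransGen step p q) :
    q.1 + q.2 = p.1 + p.2 := by
  induction h with
  | refl => rfl
  | tail _ hs ih => rw [fst_add_snd hs, ih]

theorem reflTransGen_add (x y n : ℕ) : Relation.ReflTransGen step (x + n, y) (x, y + n) := by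
  induction n generalizing y with
  | zero => rfl
  | succ n ih =>
    have hstep : step (x + (n + 1), y) (x + n, y + 1) := ⟨rfl, rfl⟩
    simpa only [Nat.add_right_comm y 1 n, Nat.add_assoc] using Relation.ReflTransGen.head hstep (ih (y + 1))

end step

theorem addition_program_correct (x y z : ℕ) :
    Relation.ReflTransGen step (x, y) (0, z) ↔ z = x + y := by
  constructor
  · intro h
    simpa using step.reflTransGen_fst_add_snd h
  · rintro rfl
    simpa [Nat.add_comm] using step.reflTransGen_add 0 y x
end

section
/- (Restricting an adjunction along faithful functors.) Let F : C ⥤ D be left adjoint to U : D ⥤ C with unit η and counit ε, and let J : C' ⥤ C and K : D' ⥤ D be faithful functors. Suppose given a function F'o on objects of C' and, for each pair of objects A, B of C', a function F'h : (A ⟶ B) → (F'o A ⟶ F'o B), and similarly U'o and U'h for D', such that for all objects and morphisms: F.obj (J.obj A) = K.obj (F'o A), U.obj (K.obj D₀) = J.obj (U'o D₀), F.map (J.map f) = K.map (F'h f) (modulo the identifications given by the object equalities), and U.map (K.map g) = J.map (U'h g) (modulo the identifications). Suppose moreover that for every object A of C' the unit component η at J.obj A lies in the image of J (i.e. it equals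 J.map φ, modulo the object identifications, for some φ : A ⟶ U'o (F'o A) in C'), and dually every counit component ε at K.obj D₀ lies in the image of K. Then F'o together with F'h defines a functor F' : C' ⥤ D', U'o together with U'h defines a functor U' : D' ⥤ C', and F' is left adjoint to U'. -/
/-!
Since `J` and `K` are faithful, an equation between morphisms of `C'` or `D'` may be checked
after applying `J` or `K`. Packaging the object identifications as natural isomorphisms
`F' ⋙ K ≅ J ⋙ F` and `U' ⋙ J ≅ K ⋙ U`, the functor laws of `F'` and `U'`, the naturality of the
lifted unit and counit and the triangle identities all become the corresponding facts for
`F ⊣ U`.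
-/

open CategoryTheory

namespace CategoryTheory.Adjunction

variable {C D C' D' : Type*} [Category C] [Category D] [Category C'] [Category D']
  {F : C ⥤ D} {U : D ⥤ C} (adj : F ⊣ U) {J : C' ⥤ C} {K : D' ⥤ D}
  {F' : C' ⥤ D'} {U' : D' ⥤ C'} (eF : F' ⋙ K ≅ J ⋙ F) (eU : U' ⋙ J ≅ K ⋙ U)
  {η' : ∀ A, A ⟶ U'.obj (F'.obj A)} {ε' : ∀ B, F'.obj (U'.obj B) ⟶ B}

lemma liftAlongFaithful_unit_naturality [J.Faithful]
    (hη' : ∀ A, J.map (η' A) =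
      adj.unit.app (J.obj A) ≫ U.map (eF.inv.app A) ≫ eU.inv.app (F'.obj A))
    {A B : C'} (f : A ⟶ B) : f ≫ η' B = η' A ≫ U'.map (F'.map f) := by
  have hF : F.map (J.map f) ≫ eF.inv.app B = eF.inv.app A ≫ K.map (F'.map f) :=
    eF.inv.naturality f
  have hU : U.map (K.map (F'.map f)) ≫ eU.inv.app (F'.obj B) =
      eU.inv.app (F'.obj A) ≫ J.map (U'.map (F'.map f)) :=
    eU.inv.naturality (F'.map f)
  apply J.map_injective
  rw [J.map_comp, J.map_comp, hη', hη', Category.assoc, ← adj.unit_naturality_assoc,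
    ← U.map_comp_assoc, hF, U.map_comp_assoc, hU]
  simp only [Category.assoc]

lemma liftAlongFaithful_counit_naturality [K.Faithful]
    (hε' : ∀ B, K.map (ε' B) =
      eF.hom.app (U'.obj B) ≫ F.map (eU.hom.app B) ≫ adj.counit.app (K.obj B))
    {A B : D'} (g : A ⟶ B) : F'.map (U'.map g) ≫ ε' B = ε' A ≫ g := by
  have hF : K.map (F'.map (U'.map g)) ≫ eF.hom.app (U'.obj B) =
      eF.hom.app (U'.obj A) ≫ F.map (J.map (U'.map g)) :=
    eF.hom.naturality (U'.map g)
  have hU : J.map (U'.map g) ≫ eU.hom.app B = eU.hom.app A ≫ U.map (K.map g) :=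
    eU.hom.naturality g
  apply K.map_injective
  rw [K.map_comp, K.map_comp, hε', hε', reassoc_of% hF, ← F.map_comp_assoc, hU,
    F.map_comp_assoc, adj.counit_naturality]
  simp only [Category.assoc]

lemma liftAlongFaithful_left_triangle [K.Faithful]
    (hη' : ∀ A, J.map (η' A) =
      adj.unit.app (J.obj A) ≫ U.map (eF.inv.app A) ≫ eU.inv.app (F'.obj A))
    (hε' : ∀ B, K.map (ε' B) =
      eF.hom.app (U'.obj B) ≫ F.map (eU.hom.app B) ≫ adj.counit.app (K.obj B))
    (A : C') : F'.map (η' A) ≫ ε' (F'.obj A) = 𝟙 (F'.obj A) := by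
  have hF : K.map (F'.map (η' A)) ≫ eF.hom.app (U'.obj (F'.obj A)) =
      eF.hom.app A ≫ F.map (J.map (η' A)) :=
    eF.hom.naturality (η' A)
  have hε : F.map (U.map (eF.inv.app A)) ≫ adj.counit.app (K.obj (F'.obj A)) =
      adj.counit.app (F.obj (J.obj A)) ≫ eF.inv.app A :=
    adj.counit_naturality _
  apply K.map_injective
  rw [K.map_comp, K.map_id, hε', reassoc_of% hF, hη', F.map_comp, F.map_comp,
    Category.assoc, Category.assoc, ← F.map_comp_assoc (eU.inv.app _), Iso.inv_hom_id_app,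
    F.map_id, Category.id_comp, hε, left_triangle_components_assoc,
    Iso.hom_inv_id_app]
  rfl

lemma liftAlongFaithful_right_triangle [J.Faithful]
    (hη' : ∀ A, J.map (η' A) =
      adj.unit.app (J.obj A) ≫ U.map (eF.inv.app A) ≫ eU.inv.app (F'.obj A))
    (hε' : ∀ B, K.map (ε' B) =
      eF.hom.app (U'.obj B) ≫ F.map (eU.hom.app B) ≫ adj.counit.app (K.obj B))
    (B : D') : η' (U'.obj B) ≫ U'.map (ε' B) = 𝟙 (U'.obj B) := by
  have hU : J.map (U'.map (ε' B)) ≫ eU.hom.app B =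
      eU.hom.app (F'.obj (U'.obj B)) ≫ U.map (K.map (ε' B)) :=
    eU.hom.naturality (ε' B)
  have hη : adj.unit.app (J.obj (U'.obj B)) ≫ U.map (F.map (eU.hom.app B)) =
      eU.hom.app B ≫ adj.unit.app (U.obj (K.obj B)) :=
    adj.unit_naturality _
  apply J.map_injective
  rw [← cancel_mono (eU.hom.app B), J.map_comp, J.map_id, Category.assoc, hU, hε', hη']
  simp [reassoc_of% hη]

def liftAlongFaithful [J.Faithful] [K.Faithful]
    (hη' : ∀ A, J.map (η' A) =
      adj.unit.app (J.obj A) ≫ U.map (eF.inv.app A) ≫ eU.inv.app (F'.obj A))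
    (hε' : ∀ B, K.map (ε' B) =
      eF.hom.app (U'.obj B) ≫ F.map (eU.hom.app B) ≫ adj.counit.app (K.obj B)) :
    F' ⊣ U' where
  unit.app := η'
  unit.naturality _ _ := liftAlongFaithful_unit_naturality adj eF eU hη'
  counit.app := ε'
  counit.naturality _ _ := liftAlongFaithful_counit_naturality adj eF eU hε'
  left_triangle_components := liftAlongFaithful_left_triangle adj eF eU hη' hε'
  right_triangle_components := liftAlongFaithful_right_triangle adj eF eU hη' hε'

end CategoryTheory.Adjunction

theorem restrict_adjunction_along_faithful
    {C D C' D' : Type*} [Category C] [Category D] [Category C'] [Category D']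
    (F : C ⥤ D) (U : D ⥤ C) (adj : F ⊣ U)
    (J : C' ⥤ C) (K : D' ⥤ D) [J.Faithful] [K.Faithful]
    (F'o : C' → D') (F'h : ∀ {A B : C'}, (A ⟶ B) → (F'o A ⟶ F'o B))
    (U'o : D' → C') (U'h : ∀ {D₀ D₁ : D'}, (D₀ ⟶ D₁) → (U'o D₀ ⟶ U'o D₁))
    (hFo : ∀ A : C', F.obj (J.obj A) = K.obj (F'o A))
    (hUo : ∀ D₀ : D', U.obj (K.obj D₀) = J.obj (U'o D₀))
    (hFm : ∀ {A B : C'} (f : A ⟶ B),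
      F.map (J.map f) = eqToHom (hFo A) ≫ K.map (F'h f) ≫ eqToHom (hFo B).symm)
    (hUm : ∀ {D₀ D₁ : D'} (g : D₀ ⟶ D₁),
      U.map (K.map g) = eqToHom (hUo D₀) ≫ J.map (U'h g) ≫ eqToHom (hUo D₁).symm)
    (hη : ∀ A : C', ∃ φ : A ⟶ U'o (F'o A),
      adj.unit.app (J.obj A) ≫
          eqToHom (show U.obj (F.obj (J.obj A)) = J.obj (U'o (F'o A)) by
            rw [hFo A, hUo (F'o A)]) =
        J.map φ)
    (hε : ∀ D₀ : D', ∃ ψ : F'o (U'o D₀) ⟶ D₀,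
      eqToHom (show K.obj (F'o (U'o D₀)) = F.obj (U.obj (K.obj D₀)) by
          rw [hUo D₀, hFo (U'o D₀)]) ≫
        adj.counit.app (K.obj D₀) = K.map ψ) :
    ∃ (F' : C' ⥤ D') (U' : D' ⥤ C')
      (hF : ∀ A, F'.obj A = F'o A) (hU : ∀ D₀, U'.obj D₀ = U'o D₀),
      (∀ {A B : C'} (f : A ⟶ B),
        F'.map f = eqToHom (hF A) ≫ F'h f ≫ eqToHom (hF B).symm) ∧
      (∀ {D₀ D₁ : D'} (g : D₀ ⟶ D₁),
        U'.map g = eqToHom (hU D₀) ≫ U'h g ≫ eqToHom (hU D₁).symm) ∧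
      Nonempty (F' ⊣ U') := by
  have hFm' {A B : C'} (f : A ⟶ B) : K.map (F'h f) ≍ (J ⋙ F).map f :=
    ((conj_eqToHom_iff_heq _ _ (hFo A) (hFo B)).1 (hFm f)).symm
  have hUm' {D₀ D₁ : D'} (g : D₀ ⟶ D₁) : J.map (U'h g) ≍ (K ⋙ U).map g :=
    ((conj_eqToHom_iff_heq _ _ (hUo D₀) (hUo D₁)).1 (hUm g)).symm
  let F' := Functor.Faithful.div (J ⋙ F) K F'o (fun A => (hFo A).symm) F'h (hFm' _)
  let U' := Functor.Faithful.div (K ⋙ U) J U'o (fun B => (hUo B).symm) U'h (hUm' _)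
  have eF : F' ⋙ K = J ⋙ F := Functor.hext (fun A => (hFo A).symm) fun _ _ => hFm'
  have eU : U' ⋙ J = K ⋙ U := Functor.hext (fun B => (hUo B).symm) fun _ _ => hUm'
  choose φ hφ using hη
  choose ψ hψ using hε
  refine ⟨F', U', fun _ => rfl, fun _ => rfl,
    fun _ => ((Category.id_comp _).trans (Category.comp_id _)).symm,
    fun _ => ((Category.id_comp _).trans (Category.comp_id _)).symm,
    ⟨adj.liftAlongFaithful (eqToIso eF) (eqToIso eU) (η' := φ) (ε' := ψ) ?_ ?_⟩⟩
  · intro A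
    refine (hφ A).symm.trans ?_
    simp only [eqToIso.inv, eqToHom_app, eqToHom_map, eqToHom_trans]
    rfl
  · intro B
    refine (hψ B).symm.trans ?_
    simp only [eqToIso.hom, eqToHom_app, eqToHom_map, eqToHom_trans_assoc]
    rfl
end
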